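/- Let Σ_I and Σ_O be nonempty finite types, let L(φ) and L(φ^v) be languages of infinite traces over Σ = Σ_I × Σ_O, let d^σ be a distance function on pairs of infinite output traces (functions ℕ → Σ_O) with values in ℕ∞ satisfying the positivity property that d^σ(y, y') ≠ 0 whenever y ≠ y', and let d^L be a language distance function. Let S be a reactive system (Mealy machine) with input alphabet Σ_I × Σ_O and output alphabet Σ_O, and suppose S is an optimal generic shield, i.e., for all x : ℕ → Σ_I and y : ℕ → Σ_O with (x || y) ∈ L(φ^v) one has d^L(L(φ), x || S(x || y)) = 0 and d^σ(y, S(x || y)) ≤ d^L(L(φ), x || y). Then S cannot deviate from the design's output before a specification violation is unavoidable: for every trace x || y ∈ L(φ^v) and every n : ℕ, if there exists a trace x' || y' ∈ L(φ^v) that agrees with x || y at all positions i < n and satisfies d^L(L(φ), x' || y') = 0, then S(x || y)(i) = y(i) for all i < n. -/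

import Mathlib

/-- A reactive system (Mealy machine) with input alphabet `A` and output alphabet `B`. -/
structure Mealy (A : Type*) (B : Type*) where
  Q : Type*
  q0 : Q
  step : Q → A → Q
  emit : Q → A → B

/-- The state sequence (run) induced by an infinite input trace. -/
def Mealy.run {A B : Type*} (M : Mealy A B) (x : ℕ → A) : ℕ → M.Q
  | 0 => M.q0
  | n + 1 => M.step (M.run x n) (x n)

/-- The output trace produced on an infinite input trace. -/
def Mealy.output {A B : Type*} (M : Mealy A B) (x : ℕ → A) (i : ℕ) : B :=
  M.emit (M.run x i) (x i)

/-- The combined trace `x || y`. -/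
def comb {A B : Type*} (x : ℕ → A) (y : ℕ → B) : ℕ → A × B :=
  fun i => (x i, y i)

/-!
A Mealy machine is causal: its output at position `i` depends only on the input up to `i`.
The witness `x' || y'` has language distance `0`, so optimality forces `dσ(y', S(x' || y')) = 0`
and, by positivity, `S(x' || y') = y'`. Since `x || y` agrees with `x' || y'` before `n`,
causality gives `S(x || y)(i) = S(x' || y')(i) = y'(i) = y(i)` for `i < n`.
-/

namespace Mealy

variable {A B : Type*} (M : Mealy A B) {u v : ℕ → A}

theorem run_congr {n : ℕ} (h : ∀ i < n, u i = v i) : M.run u n = M.run v n := by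
  induction n with
  | zero => rfl
  | succ k ih =>
    simp only [Mealy.run]
    rw [ih fun i hi => h i (Nat.lt_succ_of_lt hi), h k (Nat.lt_succ_self k)]

theorem output_congr {i : ℕ} (h : ∀ j ≤ i, u j = v j) : M.output u i = M.output v i := by
  simp only [Mealy.output]
  rw [M.run_congr fun j hj => h j hj.le, h i le_rfl]

end Mealy

theorem eq_of_dist_le_zero {α : Type*} (d : α → α → ℕ∞) (hpos : ∀ a b, a ≠ b → d a b ≠ 0)
    {a b : α} (h : d a b ≤ 0) : a = b := by
  by_contra hne
  exact hpos a b hne (nonpos_iff_eq_zero.mp h)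

theorem optimal_shield_no_premature_deviation_general
    {SI SO : Type*}
    (Lφ Lφv : Set (ℕ → SI × SO))
    (dσ : (ℕ → SO) → (ℕ → SO) → ℕ∞)
    (hpos : ∀ y y' : ℕ → SO, y ≠ y' → dσ y y' ≠ 0)
    (dL : Set (ℕ → SI × SO) → (ℕ → SI × SO) → ℕ∞)
    (S : Mealy (SI × SO) SO)
    (hshield : ∀ (x : ℕ → SI) (y : ℕ → SO), comb x y ∈ Lφv →
      dL Lφ (comb x (S.output (comb x y))) = 0 ∧
      dσ y (S.output (comb x y)) ≤ dL Lφ (comb x y)) :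
    ∀ (x : ℕ → SI) (y : ℕ → SO), comb x y ∈ Lφv → ∀ n : ℕ,
      (∃ (x' : ℕ → SI) (y' : ℕ → SO), comb x' y' ∈ Lφv ∧
        (∀ i < n, x i = x' i ∧ y i = y' i) ∧ dL Lφ (comb x' y') = 0) →
      ∀ i < n, S.output (comb x y) i = y i := by
  intro x y _ n ⟨x', y', hxy', hprefix, hcompliant⟩ i hi
  have hfix : y' = S.output (comb x' y') :=
    eq_of_dist_le_zero dσ hpos ((hshield x' y' hxy').2.trans hcompliant.le)
  have hagree : ∀ j ≤ i, comb x y j = comb x' y' j := fun j hj =>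
    congrArg₂ Prod.mk (hprefix j (hj.trans_lt hi)).1 (hprefix j (hj.trans_lt hi)).2
  calc S.output (comb x y) i
      = S.output (comb x' y') i := S.output_congr hagree
    _ = y' i := by rw [← hfix]
    _ = y i := (hprefix i hi).2.symm

/-- An optimal generic shield cannot deviate from the design's output before a
specification violation by the design is unavoidable. -/
theorem optimal_shield_no_premature_deviation
    {SI SO : Type*} [Fintype SI] [Fintype SO] [Nonempty SI] [Nonempty SO]
    (Lφ Lφv : Set (ℕ → SI × SO))
    (dσ : (ℕ → SO) → (ℕ → SO) → ℕ∞)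
    (hpos : ∀ y y' : ℕ → SO, y ≠ y' → dσ y y' ≠ 0)
    (dL : Set (ℕ → SI × SO) → (ℕ → SI × SO) → ℕ∞)
    (hLDF : ∀ (L : Set (ℕ → SI × SO)) (σ : ℕ → SI × SO), σ ∈ L → dL L σ = 0)
    (S : Mealy (SI × SO) SO)
    (hshield : ∀ (x : ℕ → SI) (y : ℕ → SO), comb x y ∈ Lφv →
      dL Lφ (comb x (S.output (comb x y))) = 0 ∧
      dσ y (S.output (comb x y)) ≤ dL Lφ (comb x y)) :
    ∀ (x : ℕ → SI) (y : ℕ → SO), comb x y ∈ Lφv → ∀ n : ℕ,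
      (∃ (x' : ℕ → SI) (y' : ℕ → SO), comb x' y' ∈ Lφv ∧
        (∀ i < n, x i = x' i ∧ y i = y' i) ∧ dL Lφ (comb x' y') = 0) →
      ∀ i < n, S.output (comb x y) i = y i :=
  optimal_shield_no_premature_deviation_general Lφ Lφv dσ hpos dL S hshield
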